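/- Estimation error bound under bounded measurement noise: if the delayed measurements satisfy |d̂ − d̄(t−h)| ≤ n_d and |v̂^f − v̄^f(t−h)| ≤ n_v, and the estimate is propagated forward h steps with the true accelerations and true controlled velocity, then the final estimation errors satisfy |ṽ^f(t) − v̄^f(t)| ≤ n_v and |d̃(t) − d̄(t)| ≤ n_d + h·t_s·n_v. -/
import Mathlib

theorem delay_compensation_error_bound (ts nd nv : ℝ) (t h : ℕ) (hht : h ≤ t)
    (hts : 0 < ts) (hnd : 0 ≤ nd) (hnv : 0 ≤ nv)
    (d vf v af : ℕ → ℝ) (de vfe : ℕ → ℝ) (dhat vfhat : ℝ)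
    (hvf0 : 0 ≤ vf (t - h))
    (hd : ∀ k, d (k + 1) = d k + ts * (vf k - v k))
    (hvf : ∀ k, vf (k + 1) = max (vf k + ts * af k) 0)
    (hdhat : |dhat - d (t - h)| ≤ nd) (hvfhat : |vfhat - vf (t - h)| ≤ nv)
    (hde0 : de (t - h) = dhat) (hvfe0 : vfe (t - h) = max vfhat 0)
    (hde : ∀ k, t - h ≤ k → k < t → de (k + 1) = de k + ts * (vfe k - v k))
    (hvfe : ∀ k, t - h ≤ k → k < t → vfe (k + 1) = max (vfe k + ts * af k) 0) :
    |vfe t - vf t| ≤ nv ∧ |de t - d t| ≤ nd + h * ts * nv := by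
  have key : ∀ j, j ≤ h →
      |vfe (t - h + j) - vf (t - h + j)| ≤ nv ∧
      |de (t - h + j) - d (t - h + j)| ≤ nd + j * ts * nv := by
    intro j
    induction j with
    | zero =>
      intro _
      simp only [Nat.add_zero]
      constructor
      · rw [hvfe0]
        calc |max vfhat 0 - vf (t - h)|
            = |max vfhat 0 - max (vf (t - h)) 0| := by
              rw [max_eq_left hvf0]
          _ ≤ |vfhat - vf (t - h)| := abs_max_sub_max_le_abs _ _ _
          _ ≤ nv := hvfhat
      · simpa [hde0] using hdhat
    | succ j ih =>
      intro hj
      have hj' : j ≤ h := Nat.le_of_succ_le hj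
      obtain ⟨ihv, ihd⟩ := ih hj'
      set k := t - h + j with hk
      have hk1 : t - h ≤ k := Nat.le_add_right _ _
      have hk2 : k < t := by omega
      have hstep : t - h + (j + 1) = k + 1 := by omega
      rw [hstep]
      constructor
      · rw [hvfe _ hk1 hk2, hvf k]
        calc |max (vfe k + ts * af k) 0 - max (vf k + ts * af k) 0|
            ≤ |(vfe k + ts * af k) - (vf k + ts * af k)| :=
              abs_max_sub_max_le_abs _ _ _
          _ = |vfe k - vf k| := by ring_nf
          _ ≤ nv := ihv
      · rw [hde _ hk1 hk2, hd k]
        have : de k + ts * (vfe k - v k) - (d k + ts * (vf k - v k))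
            = (de k - d k) + ts * (vfe k - vf k) := by ring
        rw [this]
        calc |(de k - d k) + ts * (vfe k - vf k)|
            ≤ |de k - d k| + |ts * (vfe k - vf k)| := abs_add_le _ _
          _ = |de k - d k| + ts * |vfe k - vf k| := by
              rw [abs_mul, abs_of_pos hts]
          _ ≤ (nd + j * ts * nv) + ts * nv := by
              gcongr
          _ = nd + (j + 1 : ℕ) * ts * nv := by push_cast; ring
  have := key h le_rfl
  have ht : t - h + h = t := by omega
  rwa [ht] at this
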